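/- arXiv:2410.00470 — 2 statements merged into one kernel-verified Lean document; each statement's English description precedes it below -/
import Mathlib

section
/- Let X be a complex Banach space, A, B : X → X continuous linear operators, v ∈ X, h > 0, and q ≥ 1 an integer. Then exp(−h(A−B)) v = exp(−hA) v + ∑_{j=1}^{q} h^j φⱼ(−hA) (B ((B−A)^{j−1} v)) + ∫₀^h exp(−(h−ξ)A) ( ∫₀^ξ ((ξ−σ)^{q−1}/(q−1)!) · B ((B−A)^q (exp(−σ(A−B)) v)) dσ ) dξ, where φⱼ(−hA) := ∫₀¹ exp(−(1−θ)hA) θ^{j−1}/(j−1)! dθ. -/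
/-!
The exact solution `u(t) = exp(t(B − A)) v` of `u' = −Au + Bu` satisfies Duhamel's formula
`u(h) = exp(−hA) v + ∫₀^h exp(−(h − ξ)A) B u(ξ) dξ`. Expanding `u(ξ)` by Taylor's formula with
integral remainder to order `q`, the polynomial terms `ξ^{j−1}/(j−1)! B (B − A)^{j−1} v` integrate
against `exp(−(h − ξ)A)` to `h^j φⱼ(−hA) B (B − A)^{j−1} v` after the substitution `ξ = hθ`.
-/

open intervalIntegral Finset

/-- The operator-valued φ-functions
`φⱼ(−hA) = ∫_0^1 exp(−(1−θ) h A) θ^{j−1}/(j−1)! dθ` (Bochner integral in `X →L[ℂ] X`). -/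
noncomputable def phiOp {X : Type*} [NormedAddCommGroup X] [NormedSpace ℂ X] [CompleteSpace X]
    (A : X →L[ℂ] X) (h : ℝ) (j : ℕ) : X →L[ℂ] X :=
  ∫ θ in (0 : ℝ)..1,
    (θ ^ (j - 1) / (j - 1).factorial : ℝ) •
      NormedSpace.exp ((-(((1 - θ) * h : ℝ) : ℂ)) • A)

open NormedSpace
open scoped Nat ContDiff

theorem HasDerivAt.clm_apply_const {E F : Type*} [NormedAddCommGroup E] [NormedSpace ℂ E]
    [NormedAddCommGroup F] [NormedSpace ℂ F] {T : ℝ → E →L[ℂ] F} {T' : E →L[ℂ] F} {t : ℝ}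
    (hT : HasDerivAt T T' t) (v : E) : HasDerivAt (fun s => T s v) (T' v) t :=
  ((ContinuousLinearMap.apply ℂ F v).restrictScalars ℝ).hasFDerivAt.comp_hasDerivAt t hT

section ExpSmul

variable {X : Type*} [NormedAddCommGroup X] [NormedSpace ℂ X] [CompleteSpace X]

@[fun_prop]
theorem Continuous.exp_smul_const {α : Type*} [TopologicalSpace α] {f : α → ℝ}
    (hf : Continuous f) (M : X →L[ℂ] X) : Continuous fun x => exp (f x • M) :=
  (differentiable_exp_smul_const ℝ M).continuous.comp hf

theorem hasDerivAt_pow_apply_exp_smul_apply (M : X →L[ℂ] X) (v : X) (k : ℕ) (t : ℝ) :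
    HasDerivAt (fun s : ℝ => (M ^ k) (exp (s • M) v)) ((M ^ (k + 1)) (exp (t • M) v)) t := by
  rw [pow_succ]
  exact ((M ^ k).restrictScalars ℝ).hasFDerivAt.comp_hasDerivAt t
    ((hasDerivAt_exp_smul_const' M t).clm_apply_const v)

theorem iteratedDeriv_exp_smul_apply (M : X →L[ℂ] X) (v : X) (k : ℕ) :
    iteratedDeriv k (fun s : ℝ => exp (s • M) v) = fun s => (M ^ k) (exp (s • M) v) := by
  induction k with
  | zero => simp
  | succ k ih =>
    rw [iteratedDeriv_succ, ih]
    exact funext fun s => (hasDerivAt_pow_apply_exp_smul_apply M v k s).deriv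

theorem contDiff_exp_smul_apply (M : X →L[ℂ] X) (v : X) :
    ContDiff ℝ ∞ (fun s : ℝ => exp (s • M) v) :=
  contDiff_of_differentiable_iteratedDeriv fun k _ => by
    rw [iteratedDeriv_exp_smul_apply]
    exact fun s => (hasDerivAt_pow_apply_exp_smul_apply M v k s).differentiableAt

theorem exp_smul_apply_eq_sum_add_integral (M : X →L[ℂ] X) (v : X) (n : ℕ) (ξ : ℝ) :
    exp (ξ • M) v = ∑ k ∈ range (n + 1), (ξ ^ k / k ! : ℝ) • (M ^ k) v +
      ∫ σ in 0..ξ, ((ξ - σ) ^ n / n ! : ℝ) • (M ^ (n + 1)) (exp (σ • M) v) := by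
  rcases eq_or_ne ξ 0 with rfl | hξ
  · simp [sum_range_succ']
  have hu : ContDiff ℝ (n + 1 : ℕ) (fun s : ℝ => exp (s • M) v) :=
    (contDiff_exp_smul_apply M v).of_le (by exact_mod_cast le_top)
  have hderiv (k : ℕ) (hk : k ≤ n + 1) (σ : ℝ) (hσ : σ ∈ Set.uIcc 0 ξ) :
      iteratedDerivWithin k (fun s : ℝ => exp (s • M) v) (Set.uIcc 0 ξ) σ =
        (M ^ k) (exp (σ • M) v) := by
    rw [iteratedDerivWithin_eq_iteratedDeriv (uniqueDiffOn_uIcc hξ.symm)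
      ((hu.of_le (by exact_mod_cast hk)).contDiffAt) hσ, iteratedDeriv_exp_smul_apply]
  have htaylor := taylor_integral_remainder hu.contDiffOn (x₀ := 0) (x := ξ)
  rw [taylor_within_apply, sub_eq_iff_eq_add'] at htaylor
  rw [htaylor]
  congr 1
  · refine sum_congr rfl fun k hk => ?_
    rw [hderiv k (mem_range.1 hk).le 0 Set.left_mem_uIcc]
    simp [div_eq_inv_mul]
  · exact integral_congr fun σ hσ => by simp only [hderiv (n + 1) le_rfl σ hσ]

theorem integral_smul_map_pow_apply_exp_smul_apply {Y : Type*} [NormedAddCommGroup Y]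
    [NormedSpace ℂ Y] [CompleteSpace Y] (L : X →L[ℂ] Y) (M : X →L[ℂ] X) (v : X) (n : ℕ) (ξ : ℝ) :
    ∫ σ in 0..ξ, ((ξ - σ) ^ n / n ! : ℝ) • L ((M ^ (n + 1)) (exp (σ • M) v)) =
      L (exp (ξ • M) v) - ∑ k ∈ range (n + 1), (ξ ^ k / k ! : ℝ) • L ((M ^ k) v) := by
  have hint : IntervalIntegrable (fun σ => ((ξ - σ) ^ n / n ! : ℝ) • (M ^ (n + 1)) (exp (σ • M) v))
      MeasureTheory.volume 0 ξ :=
    (by fun_prop : Continuous _).intervalIntegrable _ _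
  rw [exp_smul_apply_eq_sum_add_integral M v n ξ, map_add, map_sum,
    ← L.intervalIntegral_comp_comm hint]
  simp

theorem exp_smul_sub_apply_eq_add_integral (A B : X →L[ℂ] X) (v : X) (h : ℝ) :
    exp (h • (B - A)) v = exp ((-h) • A) v +
      ∫ ξ in 0..h, exp ((ξ - h) • A) (B (exp (ξ • (B - A)) v)) := by
  have hderiv (ξ : ℝ) : HasDerivAt (fun s : ℝ => (exp ((s - h) • A) * exp (s • (B - A))) v)
      (exp ((ξ - h) • A) (B (exp (ξ • (B - A)) v))) ξ := by
    have hA : HasDerivAt (fun s : ℝ => exp ((s - h) • A)) (exp ((ξ - h) • A) * A) ξ :=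
      (hasDerivAt_exp_smul_const A (ξ - h)).comp_sub_const ξ h
    have hprod : HasDerivAt (fun s : ℝ => exp ((s - h) • A) * exp (s • (B - A)))
        (exp ((ξ - h) • A) * B * exp (ξ • (B - A))) ξ :=
      (hA.mul (hasDerivAt_exp_smul_const' (B - A) ξ)).congr_deriv (by noncomm_ring)
    exact hprod.clm_apply_const v
  have hftc := integral_eq_sub_of_hasDerivAt (fun ξ _ => hderiv ξ)
    ((by fun_prop : Continuous _).intervalIntegrable 0 h)
  simp only [sub_self, zero_smul, exp_zero, one_mul, mul_one, zero_sub] at hftc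
  rw [hftc]
  abel

theorem phiOp_succ_apply (A : X →L[ℂ] X) (h : ℝ) (k : ℕ) (w : X) :
    phiOp A h (k + 1) w = ∫ θ in 0..1, (θ ^ k / k ! : ℝ) • exp ((θ * h - h) • A) w := by
  have hsmul (θ : ℝ) : (-(((1 - θ) * h : ℝ) : ℂ)) • A = (θ * h - h) • A := by
    rw [← Complex.ofReal_neg, Complex.coe_smul]
    ring_nf
  rw [phiOp, Nat.add_sub_cancel]
  simp only [hsmul]
  rw [ContinuousLinearMap.intervalIntegral_apply
    ((by fun_prop : Continuous _).intervalIntegrable 0 1)]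
  simp only [FunLike.coe_smul, Pi.smul_apply]

theorem pow_succ_smul_phiOp_succ_apply (A : X →L[ℂ] X) (h : ℝ) (k : ℕ) (w : X) :
    h ^ (k + 1) • phiOp A h (k + 1) w =
      ∫ ξ in 0..h, (ξ ^ k / k ! : ℝ) • exp ((ξ - h) • A) w := by
  set f : ℝ → X := fun ξ => (ξ ^ k / k ! : ℝ) • exp ((ξ - h) • A) w
  calc h ^ (k + 1) • phiOp A h (k + 1) w = h • ∫ θ in 0..1, f (h * θ) := by
        rw [phiOp_succ_apply, pow_succ', mul_smul, ← intervalIntegral.integral_smul]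
        refine congrArg _ (integral_congr fun θ _ => ?_)
        simp only [f, smul_smul, mul_pow]
        ring_nf
    _ = ∫ ξ in 0..h, f ξ := by
        rw [smul_integral_comp_mul_left, mul_zero, mul_one]

end ExpSmul

theorem exp_expansion_general {X : Type*} [NormedAddCommGroup X] [NormedSpace ℂ X] [CompleteSpace X]
    (A B : X →L[ℂ] X) (v : X) (h : ℝ) (q : ℕ) (hq : 1 ≤ q) :
    NormedSpace.exp ((-(h : ℂ)) • (A - B)) v =
      NormedSpace.exp ((-(h : ℂ)) • A) v +
        (∑ j ∈ Finset.Icc 1 q,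
          (h ^ j : ℝ) • (phiOp A h j) (B (((B - A) ^ (j - 1)) v))) +
        ∫ ξ in (0 : ℝ)..h,
          NormedSpace.exp ((-((h - ξ : ℝ) : ℂ)) • A)
            (∫ σ in (0 : ℝ)..ξ,
              ((ξ - σ) ^ (q - 1) / (q - 1).factorial : ℝ) •
                B (((B - A) ^ q) (NormedSpace.exp ((-(σ : ℂ)) • (A - B)) v))) := by
  obtain ⟨n, rfl⟩ : ∃ n, q = n + 1 := ⟨q - 1, by omega⟩
  have hsmul (r : ℝ) (M : X →L[ℂ] X) : (-(r : ℂ)) • M = (-r) • M := by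
    rw [← Complex.ofReal_neg, Complex.coe_smul]
  have hflip (r : ℝ) : (-r) • (A - B) = r • (B - A) := by
    rw [neg_smul, ← smul_neg, neg_sub]
  simp only [hsmul, hflip, neg_sub, Nat.add_sub_cancel, integral_smul_map_pow_apply_exp_smul_apply]
  rw [exp_smul_sub_apply_eq_add_integral, add_assoc]
  congr 1
  have hsum : ∑ j ∈ Icc 1 (n + 1), h ^ j • phiOp A h j (B (((B - A) ^ (j - 1)) v)) =
      ∑ k ∈ range (n + 1),
        ∫ ξ in 0..h, (ξ ^ k / k ! : ℝ) • exp ((ξ - h) • A) (B (((B - A) ^ k) v)) := by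
    rw [← Ico_add_one_right_eq_Icc, sum_Ico_eq_sum_range, Nat.add_sub_cancel]
    refine sum_congr rfl fun k _ => ?_
    rw [add_comm 1 k, pow_succ_smul_phiOp_succ_apply, Nat.add_sub_cancel]
  simp only [map_sub, map_sum, ContinuousLinearMap.map_smul_of_tower]
  rw [hsum, integral_sub, integral_finsetSum, add_sub_cancel]
  · exact fun k _ => (by fun_prop : Continuous _).intervalIntegrable _ _
  all_goals exact (by fun_prop : Continuous _).intervalIntegrable _ _

/-- Taylor expansion with integral remainder of the exact solution `exp(−h(A−B)) v`
inserted into the variation-of-constants formula: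
`exp(−h(A−B)) v = exp(−hA) v + ∑_{j=1}^q h^j φⱼ(−hA) (B ((B−A)^{j−1} v))`
`+ ∫_0^h exp(−(h−ξ)A) (∫_0^ξ ((ξ−σ)^{q−1}/(q−1)!) • B ((B−A)^q (exp(−σ(A−B)) v)) dσ) dξ`. -/
theorem exp_expansion {X : Type*} [NormedAddCommGroup X] [NormedSpace ℂ X] [CompleteSpace X]
    (A B : X →L[ℂ] X) (v : X) (h : ℝ) (hh : 0 < h) (q : ℕ) (hq : 1 ≤ q) :
    NormedSpace.exp ((-(h : ℂ)) • (A - B)) v =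
      NormedSpace.exp ((-(h : ℂ)) • A) v +
        (∑ j ∈ Finset.Icc 1 q,
          (h ^ j : ℝ) • (phiOp A h j) (B (((B - A) ^ (j - 1)) v))) +
        ∫ ξ in (0 : ℝ)..h,
          NormedSpace.exp ((-((h - ξ : ℝ) : ℂ)) • A)
            (∫ σ in (0 : ℝ)..ξ,
              ((ξ - σ) ^ (q - 1) / (q - 1).factorial : ℝ) •
                B (((B - A) ^ q) (NormedSpace.exp ((-(σ : ℂ)) • (A - B)) v))) :=
  exp_expansion_general A B v h q hq
end

section
/- Let ζ > 0. There exists a constant C > 0 depending only on ζ such that for every integer N ≥ 1 and all real coefficients a₁, …, a_N, if f(x) = ∑_{k=1}^{N} aₖ sin(kπx) and g(x) = ∑_{k=1}^{N} aₖ (kπ)^{−2ζ−1} ( cos(kπx) + (1 − (−1)^k) x − 1 ), then ∫₀¹ |g(x)| dx ≤ C ∫₀¹ |f(x)| dx. -/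
open Real Finset intervalIntegral

lemma integral_cos_cx (c : ℝ) (hc : c ≠ 0) :
    ∫ x in (0:ℝ)..1, Real.cos (c * x) = Real.sin c / c := by
  have h := mul_integral_comp_mul_left (a := (0:ℝ)) (b := 1) (c := c) (f := Real.cos)
  rw [mul_zero, mul_one, integral_cos, Real.sin_zero, sub_zero] at h
  rw [eq_div_iff hc]
  linarith [h]

lemma integral_cos_rpi (r : ℝ) (hr : r ≠ 0) (hs : Real.sin (r * π) = 0) :
    ∫ x in (0:ℝ)..1, Real.cos (r * π * x) = 0 := by
  have hc : r * π ≠ 0 := mul_ne_zero hr Real.pi_ne_zero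
  rw [integral_cos_cx _ hc, hs, zero_div]

lemma sin_orth (j k : ℕ) (hj : 1 ≤ j) (hk : 1 ≤ k) :
    ∫ x in (0:ℝ)..1, Real.sin ((j:ℝ)*π*x) * Real.sin ((k:ℝ)*π*x)
      = if j = k then 1/2 else 0 := by
  have key : ∀ x : ℝ, Real.sin ((j:ℝ)*π*x) * Real.sin ((k:ℝ)*π*x)
      = (Real.cos (((j:ℝ)-(k:ℝ))*π*x) - Real.cos (((j:ℝ)+(k:ℝ))*π*x)) / 2 := by
    intro x
    have h := Real.cos_sub_cos (((j:ℝ)-(k:ℝ))*π*x) (((j:ℝ)+(k:ℝ))*π*x)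
    have e1 : ((((j:ℝ)-(k:ℝ))*π*x) + (((j:ℝ)+(k:ℝ))*π*x))/2 = (j:ℝ)*π*x := by ring
    have e2 : ((((j:ℝ)-(k:ℝ))*π*x) - (((j:ℝ)+(k:ℝ))*π*x))/2 = -((k:ℝ)*π*x) := by ring
    rw [e1, e2, Real.sin_neg] at h
    linarith
  simp only [key]
  rw [intervalIntegral.integral_div]
  rw [intervalIntegral.integral_sub ((by fun_prop : Continuous fun x : ℝ =>
        Real.cos (((j:ℝ)-(k:ℝ))*π*x)).intervalIntegrable 0 1)
      ((by fun_prop : Continuous fun x : ℝ =>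
        Real.cos (((j:ℝ)+(k:ℝ))*π*x)).intervalIntegrable 0 1)]
  have hsum : ∫ x in (0:ℝ)..1, Real.cos (((j:ℝ)+(k:ℝ))*π*x) = 0 := by
    refine integral_cos_rpi _ (by positivity) ?_
    have h0 := Real.sin_int_mul_pi ((j:ℤ) + (k:ℤ))
    push_cast at h0
    exact h0
  by_cases hjk : j = k
  · subst hjk
    simp only [sub_self, zero_mul, Real.cos_zero, hsum, if_pos rfl]
    norm_num
  · have hdiff : ∫ x in (0:ℝ)..1, Real.cos (((j:ℝ)-(k:ℝ))*π*x) = 0 := by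
      refine integral_cos_rpi _ (sub_ne_zero.mpr (by exact_mod_cast hjk)) ?_
      have h0 := Real.sin_int_mul_pi ((j:ℤ) - (k:ℤ))
      push_cast at h0
      exact h0
    rw [hdiff, hsum, if_neg hjk]
    norm_num

lemma coeff_eq (N : ℕ) (a : ℕ → ℝ) (k : ℕ) (hk : k ∈ Finset.Icc 1 N) :
    ∫ x in (0:ℝ)..1,
      (∑ j ∈ Finset.Icc 1 N, a j * Real.sin ((j:ℝ)*π*x)) * Real.sin ((k:ℝ)*π*x)
      = a k / 2 := by
  have hk1 : 1 ≤ k := (Finset.mem_Icc.mp hk).1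
  have step : ∀ x : ℝ,
      (∑ j ∈ Finset.Icc 1 N, a j * Real.sin ((j:ℝ)*π*x)) * Real.sin ((k:ℝ)*π*x)
      = ∑ j ∈ Finset.Icc 1 N, a j * (Real.sin ((j:ℝ)*π*x) * Real.sin ((k:ℝ)*π*x)) := by
    intro x
    rw [Finset.sum_mul]
    exact Finset.sum_congr rfl fun j _ => by ring
  simp only [step]
  rw [intervalIntegral.integral_finset_sum (fun j _ =>
      ((by fun_prop : Continuous fun x : ℝ =>
        a j * (Real.sin ((j:ℝ)*π*x) * Real.sin ((k:ℝ)*π*x))).intervalIntegrable 0 1))]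
  have : ∀ j ∈ Finset.Icc 1 N,
      (∫ x in (0:ℝ)..1, a j * (Real.sin ((j:ℝ)*π*x) * Real.sin ((k:ℝ)*π*x)))
      = a j * (if j = k then (1:ℝ)/2 else 0) := by
    intro j hj
    rw [intervalIntegral.integral_const_mul, sin_orth j k (Finset.mem_Icc.mp hj).1 hk1]
  rw [Finset.sum_congr rfl this]
  rw [Finset.sum_eq_single k (fun j _ hjk => by rw [if_neg hjk, mul_zero])
    (fun h => absurd hk h)]
  rw [if_pos rfl]
  ring

lemma abs_coeff_le (N : ℕ) (a : ℕ → ℝ) (k : ℕ) (hk : k ∈ Finset.Icc 1 N) :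
    |a k| ≤ 2 * ∫ x in (0:ℝ)..1, |∑ j ∈ Finset.Icc 1 N, a j * Real.sin ((j:ℝ)*π*x)| := by
  have hf : Continuous fun x : ℝ => ∑ j ∈ Finset.Icc 1 N, a j * Real.sin ((j:ℝ)*π*x) := by
    fun_prop
  have h1 : |a k / 2| ≤ ∫ x in (0:ℝ)..1,
      |(∑ j ∈ Finset.Icc 1 N, a j * Real.sin ((j:ℝ)*π*x)) * Real.sin ((k:ℝ)*π*x)| := by
    rw [← coeff_eq N a k hk]
    exact intervalIntegral.abs_integral_le_integral_abs (by norm_num)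
  have h2 : (∫ x in (0:ℝ)..1,
        |(∑ j ∈ Finset.Icc 1 N, a j * Real.sin ((j:ℝ)*π*x)) * Real.sin ((k:ℝ)*π*x)|)
      ≤ ∫ x in (0:ℝ)..1, |∑ j ∈ Finset.Icc 1 N, a j * Real.sin ((j:ℝ)*π*x)| := by
    apply intervalIntegral.integral_mono_on (by norm_num)
      ((by fun_prop : Continuous fun x : ℝ =>
        |(∑ j ∈ Finset.Icc 1 N, a j * Real.sin ((j:ℝ)*π*x)) * Real.sin ((k:ℝ)*π*x)|).intervalIntegrable 0 1)
      ((hf.abs).intervalIntegrable 0 1)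
    intro x _
    rw [abs_mul]
    calc |∑ j ∈ Finset.Icc 1 N, a j * Real.sin ((j:ℝ)*π*x)| * |Real.sin ((k:ℝ)*π*x)|
        ≤ |∑ j ∈ Finset.Icc 1 N, a j * Real.sin ((j:ℝ)*π*x)| * 1 :=
          mul_le_mul_of_nonneg_left (Real.abs_sin_le_one _) (abs_nonneg _)
      _ = _ := mul_one _
  rw [abs_div] at h1
  have : |a k| / 2 ≤ ∫ x in (0:ℝ)..1, |∑ j ∈ Finset.Icc 1 N, a j * Real.sin ((j:ℝ)*π*x)| := by
    calc |a k| / 2 = |a k| / |(2:ℝ)| := by norm_num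
      _ ≤ _ := le_trans h1 h2
  linarith

/-- `L¹(0,1)`-boundedness, uniformly in `N`, of the operator `A⁻¹ B A^{−ζ}` acting on finite
sine polynomials `f(x) = ∑_{k=1}^N aₖ sin(kπx)`, where `A = −d²/dx²` with homogeneous
Dirichlet boundary conditions on `[0,1]` and `B = d/dx`; on the mode `sin(kπx)` the operator
acts as multiplication by `(kπ)^{−2ζ−1}` followed by replacing `sin(kπx)` with
`cos(kπx) + (1−(−1)^k)x − 1`. -/
theorem L1_bound_inverse_deriv_power (ζ : ℝ) (hζ : 0 < ζ) :
    ∃ C > (0 : ℝ), ∀ N : ℕ, 1 ≤ N → ∀ a : ℕ → ℝ,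
      (∫ x in (0 : ℝ)..1,
        |∑ k ∈ Finset.Icc 1 N, a k * ((k : ℝ) * π) ^ (-2 * ζ - 1) *
          (Real.cos ((k : ℝ) * π * x) + (1 - (-1 : ℝ) ^ k) * x - 1)|) ≤
      C * ∫ x in (0 : ℝ)..1, |∑ k ∈ Finset.Icc 1 N, a k * Real.sin ((k : ℝ) * π * x)| := by
  have hsummable : Summable (fun k : ℕ => ((k:ℝ)*π) ^ (-2 * ζ - 1)) := by
    have h1 : Summable (fun k : ℕ => (k:ℝ) ^ (-2 * ζ - 1) * π ^ (-2 * ζ - 1)) :=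
      (Real.summable_nat_rpow.mpr (by linarith)).mul_right _
    refine h1.congr fun k => ?_
    rw [Real.mul_rpow (Nat.cast_nonneg k) Real.pi_pos.le]
  set S := ∑' k : ℕ, ((k:ℝ)*π) ^ (-2 * ζ - 1) with hS
  have hS0 : 0 ≤ S := tsum_nonneg fun k => Real.rpow_nonneg (by positivity) _
  refine ⟨8*S + 1, by linarith, ?_⟩
  intro N hN a
  set M := ∫ x in (0:ℝ)..1, |∑ k ∈ Finset.Icc 1 N, a k * Real.sin ((k:ℝ)*π*x)| with hM
  have hM0 : 0 ≤ M :=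
    intervalIntegral.integral_nonneg (by norm_num) (fun x _ => abs_nonneg _)
  have hpt : ∀ x ∈ Set.Icc (0:ℝ) 1,
      |∑ k ∈ Finset.Icc 1 N, a k * ((k:ℝ)*π) ^ (-2 * ζ - 1) *
        (Real.cos ((k:ℝ)*π*x) + (1 - (-1:ℝ)^k)*x - 1)|
      ≤ ∑ k ∈ Finset.Icc 1 N, |a k| * ((k:ℝ)*π) ^ (-2 * ζ - 1) * 4 := by
    intro x hx
    refine le_trans (Finset.abs_sum_le_sum_abs _ _) (Finset.sum_le_sum fun k hk => ?_)
    rw [abs_mul, abs_mul]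
    have hrp : 0 ≤ ((k:ℝ)*π) ^ (-2 * ζ - 1) := Real.rpow_nonneg (by positivity) _
    rw [abs_of_nonneg hrp]
    refine mul_le_mul_of_nonneg_left ?_ (by positivity)
    have h1 : |Real.cos ((k:ℝ)*π*x)| ≤ 1 := Real.abs_cos_le_one _
    have h2 : |(1 - (-1:ℝ)^k) * x| ≤ 2 := by
      rw [abs_mul]
      have hb : |(1 - (-1:ℝ)^k)| ≤ 2 := by
        rcases Nat.even_or_odd k with h | h
        · rw [h.neg_one_pow]; norm_num
        · rw [h.neg_one_pow]; norm_num
      have hxx : |x| ≤ 1 := by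
        rw [abs_of_nonneg hx.1]; exact hx.2
      calc |(1 - (-1:ℝ)^k)| * |x| ≤ 2 * 1 :=
            mul_le_mul hb hxx (abs_nonneg _) (by norm_num)
        _ = 2 := by norm_num
    calc |Real.cos ((k:ℝ)*π*x) + (1 - (-1:ℝ)^k)*x - 1|
        ≤ |Real.cos ((k:ℝ)*π*x) + (1 - (-1:ℝ)^k)*x| + |(1:ℝ)| := abs_sub _ _
      _ ≤ |Real.cos ((k:ℝ)*π*x)| + |(1 - (-1:ℝ)^k)*x| + |(1:ℝ)| := by
          have := abs_add_le (Real.cos ((k:ℝ)*π*x)) ((1 - (-1:ℝ)^k)*x)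
          linarith
      _ ≤ 1 + 2 + 1 := by
          have : |(1:ℝ)| = 1 := abs_one
          linarith
      _ = 4 := by norm_num
  have hint : (∫ x in (0:ℝ)..1,
      |∑ k ∈ Finset.Icc 1 N, a k * ((k:ℝ)*π) ^ (-2 * ζ - 1) *
        (Real.cos ((k:ℝ)*π*x) + (1 - (-1:ℝ)^k)*x - 1)|)
      ≤ ∑ k ∈ Finset.Icc 1 N, |a k| * ((k:ℝ)*π) ^ (-2 * ζ - 1) * 4 := by
    have hcont : Continuous fun x : ℝ => ∑ k ∈ Finset.Icc 1 N,
        a k * ((k:ℝ)*π) ^ (-2 * ζ - 1) *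
        (Real.cos ((k:ℝ)*π*x) + (1 - (-1:ℝ)^k)*x - 1) := by fun_prop
    have := intervalIntegral.integral_mono_on (by norm_num : (0:ℝ) ≤ 1)
      (hcont.abs.intervalIntegrable 0 1)
      ((continuous_const.intervalIntegrable 0 1 : IntervalIntegrable (fun _ : ℝ => ∑ k ∈ Finset.Icc 1 N, |a k| * ((k:ℝ)*π) ^ (-2 * ζ - 1) * 4) MeasureTheory.volume 0 1))
      hpt
    calc (∫ x in (0:ℝ)..1, |∑ k ∈ Finset.Icc 1 N, a k * ((k:ℝ)*π) ^ (-2 * ζ - 1) *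
          (Real.cos ((k:ℝ)*π*x) + (1 - (-1:ℝ)^k)*x - 1)|)
        ≤ ∫ _x in (0:ℝ)..1, (∑ k ∈ Finset.Icc 1 N,
            |a k| * ((k:ℝ)*π) ^ (-2 * ζ - 1) * 4) := this
      _ = ∑ k ∈ Finset.Icc 1 N, |a k| * ((k:ℝ)*π) ^ (-2 * ζ - 1) * 4 := by
          rw [intervalIntegral.integral_const]; simp
  have hsum : (∑ k ∈ Finset.Icc 1 N, |a k| * ((k:ℝ)*π) ^ (-2 * ζ - 1) * 4)
      ≤ 8 * S * M := by
    have step1 : (∑ k ∈ Finset.Icc 1 N, |a k| * ((k:ℝ)*π) ^ (-2 * ζ - 1) * 4)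
        ≤ ∑ k ∈ Finset.Icc 1 N, (2*M) * ((k:ℝ)*π) ^ (-2 * ζ - 1) * 4 := by
      refine Finset.sum_le_sum fun k hk => ?_
      have hrp : 0 ≤ ((k:ℝ)*π) ^ (-2 * ζ - 1) := Real.rpow_nonneg (by positivity) _
      have hak : |a k| ≤ 2 * M := abs_coeff_le N a k hk
      have := mul_le_mul_of_nonneg_right hak hrp
      nlinarith
    have step2 : (∑ k ∈ Finset.Icc 1 N, (2*M) * ((k:ℝ)*π) ^ (-2 * ζ - 1) * 4)
        = 8 * M * ∑ k ∈ Finset.Icc 1 N, ((k:ℝ)*π) ^ (-2 * ζ - 1) := by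
      rw [Finset.mul_sum]
      exact Finset.sum_congr rfl fun k _ => by ring
    have step3 : (∑ k ∈ Finset.Icc 1 N, ((k:ℝ)*π) ^ (-2 * ζ - 1)) ≤ S :=
      Summable.sum_le_tsum _ (fun k _ => Real.rpow_nonneg (by positivity) _) hsummable
    calc (∑ k ∈ Finset.Icc 1 N, |a k| * ((k:ℝ)*π) ^ (-2 * ζ - 1) * 4)
        ≤ 8 * M * ∑ k ∈ Finset.Icc 1 N, ((k:ℝ)*π) ^ (-2 * ζ - 1) := by
          rw [← step2]; exact step1
      _ ≤ 8 * M * S := mul_le_mul_of_nonneg_left step3 (by linarith)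
      _ = 8 * S * M := by ring
  calc (∫ x in (0:ℝ)..1,
      |∑ k ∈ Finset.Icc 1 N, a k * ((k:ℝ)*π) ^ (-2 * ζ - 1) *
        (Real.cos ((k:ℝ)*π*x) + (1 - (-1:ℝ)^k)*x - 1)|)
      ≤ 8 * S * M := le_trans hint hsum
    _ ≤ (8*S + 1) * M := by nlinarith
end
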